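/- arXiv:2003.09838 — 2 statements merged into one kernel-verified Lean document; each statement's English description precedes it below -/
import Mathlib

section
/- Let i and d0 be positive integers. There exists a polynomial P with rational coefficients such that P(r) equals the sum of k^i for k from d0 + 1 to r - d0 - 1, for every natural number r with r ≥ 2*d0 + 2, and the constant coefficient of P equals -(1 + (-1)^i) times the sum of k^i for k from 1 to d0. -/
open Polynomial Finset

/-! Faulhaber's polynomial `F` with `F(n) = ∑_{k<n} k^i` satisfies `F(x+1) = F(x) + x^i`, so
running this recursion backwards gives `F(-m) = -(-1)^i ∑_{k=1}^m k^i`. The mid-range sum is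
`F(r - d0) - F(d0 + 1)`, i.e. the value at `r` of `F(X - d0) - ∑_{k=1}^{d0} k^i`, whose constant
term is `F(-d0) - ∑_{k=1}^{d0} k^i`. -/

noncomputable def faulhaber (i : ℕ) : ℚ[X] :=
  C ((i + 1 : ℚ)⁻¹) * (Polynomial.bernoulli (i + 1) - C (_root_.bernoulli (i + 1)))

theorem faulhaber_eval (i : ℕ) (x : ℚ) :
    (faulhaber i).eval x = ((i : ℚ) + 1)⁻¹ *
      ((Polynomial.bernoulli (i + 1)).eval x - _root_.bernoulli (i + 1)) := by
  simp only [faulhaber, eval_mul, eval_sub, eval_C]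

theorem faulhaber_eval_natCast (i n : ℕ) :
    (faulhaber i).eval (n : ℚ) = ∑ k ∈ range n, (k : ℚ) ^ i := by
  rw [faulhaber_eval, ← sum_range_pow_eq_bernoulli_sub, inv_mul_cancel_left₀ (by positivity)]

theorem faulhaber_eval_add_one (i : ℕ) (x : ℚ) :
    (faulhaber i).eval (x + 1) = (faulhaber i).eval x + x ^ i := by
  have hi : ((i : ℚ) + 1) ≠ 0 := by positivity
  rw [faulhaber_eval, faulhaber_eval, add_comm x, bernoulli_eval_one_add, Nat.add_sub_cancel]
  push_cast
  field_simp
  ring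

theorem faulhaber_eval_neg_natCast (i m : ℕ) :
    (faulhaber i).eval (-(m : ℚ)) = -(-1) ^ i * ∑ k ∈ Icc 1 m, (k : ℚ) ^ i := by
  induction m with
  | zero => simpa using faulhaber_eval_natCast i 0
  | succ m ih =>
    have hstep := faulhaber_eval_add_one i (-((m : ℚ) + 1))
    rw [show -((m : ℚ) + 1) + 1 = -m by ring, ih, neg_pow ((m : ℚ) + 1)] at hstep
    rw [sum_Icc_succ_top (by omega), Nat.cast_succ]
    linear_combination -hstep

theorem sum_range_succ_pow_eq_sum_Icc_one {i : ℕ} (hi : 0 < i) (n : ℕ) :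
    ∑ k ∈ range (n + 1), (k : ℚ) ^ i = ∑ k ∈ Icc 1 n, (k : ℚ) ^ i := by
  rw [range_eq_Ico, sum_eq_sum_Ico_succ_bot (by omega), Ico_add_one_right_eq_Icc, Nat.cast_zero,
    zero_pow hi.ne', zero_add]

theorem sum_Icc_eq_sum_range_sub_sum_range {M : Type*} [AddCommGroup M] (f : ℕ → M) {a n : ℕ}
    (h : a < n) :
    ∑ k ∈ Icc (a + 1) (n - 1), f k = ∑ k ∈ range n, f k - ∑ k ∈ range (a + 1), f k := by
  rw [← sum_Ico_eq_sub _ h, ← Ico_add_one_right_eq_Icc, Nat.sub_add_cancel (by omega)]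

theorem mid_range_power_sum_polynomial_general (i d0 : ℕ) (hi : 0 < i) :
    ∃ P : Polynomial ℚ,
      (∀ r : ℕ, 2 * d0 + 2 ≤ r →
        P.eval (r : ℚ) = ∑ k ∈ Finset.Icc (d0 + 1) (r - d0 - 1), (k : ℚ) ^ i) ∧
      P.coeff 0 = -(1 + (-1) ^ i) * ∑ k ∈ Finset.Icc 1 d0, (k : ℚ) ^ i := by
  refine ⟨(faulhaber i).comp (X - C (d0 : ℚ)) - C (∑ k ∈ Icc 1 d0, (k : ℚ) ^ i),
    fun r hr => ?_, ?_⟩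
  · have hshift : (r : ℚ) - d0 = ((r - d0 : ℕ) : ℚ) := (Nat.cast_sub (by omega)).symm
    rw [sum_Icc_eq_sum_range_sub_sum_range _ (by omega : d0 < r - d0),
      sum_range_succ_pow_eq_sum_Icc_one hi]
    simp only [eval_sub, eval_comp, eval_X, eval_C, hshift, faulhaber_eval_natCast]
  · rw [coeff_zero_eq_eval_zero]
    simp only [eval_sub, eval_comp, eval_X, eval_C, zero_sub, faulhaber_eval_neg_natCast]
    ring

/-- For positive integers `i, d0` there is `P ∈ ℚ[x]` with
`P(r) = ∑_{k=d0+1}^{r-d0-1} k^i` for all `r ≥ 2*d0+2`, whose constant coefficient is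
`-(1 + (-1)^i) ∑_{k=1}^{d0} k^i`. -/
theorem mid_range_power_sum_polynomial (i d0 : ℕ) (hi : 0 < i) (hd0 : 0 < d0) :
    ∃ P : Polynomial ℚ,
      (∀ r : ℕ, 2 * d0 + 2 ≤ r →
        P.eval (r : ℚ) = ∑ k ∈ Finset.Icc (d0 + 1) (r - d0 - 1), (k : ℚ) ^ i) ∧
      P.coeff 0 = -(1 + (-1) ^ i) * ∑ k ∈ Finset.Icc 1 d0, (k : ℚ) ^ i :=
  mid_range_power_sum_polynomial_general i d0 hi
end

section
/- Let i be a positive even integer and d0 a positive integer. If P is a polynomial with rational coefficients such that P(r) equals the sum of k^i for k from d0 + 1 to r - d0 - 1 for all natural numbers r ≥ 2*d0 + 2, then the constant coefficient of P equals -2 times the sum of k^i for k from 1 to d0. -/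
/-!
With `B = Polynomial.bernoulli (i + 1)`, Faulhaber's formula gives
`(i + 1) * ∑_{k=a}^{b} k^i = B(b + 1) - B(a)`, so `(i + 1) * P(X) = B(X - d₀) - B(d₀ + 1)`
as polynomials. Since `i + 1` is odd, the reflection `B(1 - x) = -B(x)` turns `B(-d₀)` into
`-B(d₀ + 1)`, and `B(1) = B'_{i+1} = 0` makes `B(d₀ + 1) = (i + 1) * ∑_{k=1}^{d₀} k^i`.
-/

open Polynomial Filter Finset

theorem Polynomial.eq_of_eventually_eval_natCast_eq {R : Type*} [CommRing R] [IsDomain R]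
    [CharZero R] {p q : R[X]} (h : ∀ᶠ n : ℕ in atTop, p.eval (n : R) = q.eval (n : R)) :
    p = q := by
  obtain ⟨N, hN⟩ := eventually_atTop.mp h
  refine eq_of_infinite_eval_eq p q (((Set.Ici_infinite N).image Nat.cast_injective.injOn).mono ?_)
  rintro _ ⟨n, hn, rfl⟩
  exact hN n hn

theorem Polynomial.bernoulli_eval_neg_of_odd {n : ℕ} (hn : Odd n) (x : ℚ) :
    (bernoulli n).eval (-x) = -(bernoulli n).eval (x + 1) := by
  have := bernoulli_eval_one_sub n (x + 1)
  rwa [show (1 : ℚ) - (x + 1) = -x by ring, hn.neg_one_pow, neg_one_mul] at this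

theorem Polynomial.mul_sum_Icc_pow_eq_bernoulli_sub (p : ℕ) {a b : ℕ} (hab : a ≤ b + 1) :
    (p + 1 : ℚ) * ∑ k ∈ Icc a b, (k : ℚ) ^ p =
      (bernoulli (p + 1)).eval ((b : ℚ) + 1) - (bernoulli (p + 1)).eval (a : ℚ) := by
  rw [← Ico_add_one_right_eq_Icc, sum_Ico_eq_sub _ hab, mul_sub, sum_range_pow_eq_bernoulli_sub,
    sum_range_pow_eq_bernoulli_sub, sub_sub_sub_cancel_right, Nat.cast_add_one]

theorem Polynomial.bernoulli_eval_natCast_succ_of_even {p : ℕ} (hp : 0 < p) (heven : Even p)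
    (n : ℕ) :
    (bernoulli (p + 1)).eval ((n : ℚ) + 1) = (p + 1 : ℚ) * ∑ k ∈ Icc 1 n, (k : ℚ) ^ p := by
  rw [mul_sum_Icc_pow_eq_bernoulli_sub p (by omega), Nat.cast_one, bernoulli_eval_one,
    bernoulli'_eq_zero_of_odd heven.add_one (by omega), sub_zero]

theorem mid_range_power_sum_even_constant_general (i d0 : ℕ) (hi : 0 < i) (heven : Even i)
    (P : Polynomial ℚ)
    (hP : ∀ r : ℕ, 2 * d0 + 2 ≤ r →
      P.eval (r : ℚ) = ∑ k ∈ Finset.Icc (d0 + 1) (r - d0 - 1), (k : ℚ) ^ i) :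
    P.coeff 0 = -2 * ∑ k ∈ Finset.Icc 1 d0, (k : ℚ) ^ i := by
  have hscaled : C (i + 1 : ℚ) * P = (Polynomial.bernoulli (i + 1)).comp (X - C (d0 : ℚ)) -
      C ((Polynomial.bernoulli (i + 1)).eval ((d0 : ℚ) + 1)) := by
    refine eq_of_eventually_eval_natCast_eq (eventually_atTop.mpr ⟨2 * d0 + 2, fun r hr => ?_⟩)
    have hshift : ((r - d0 - 1 : ℕ) : ℚ) + 1 = r - d0 := by
      rw [← Nat.cast_add_one, Nat.sub_add_cancel (by omega), Nat.cast_sub (by omega)]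
    simp only [eval_mul, eval_C, eval_sub, eval_comp, eval_X, hP r hr,
      mul_sum_Icc_pow_eq_bernoulli_sub i (by omega : d0 + 1 ≤ r - d0 - 1 + 1), hshift,
      Nat.cast_add_one]
  have hconst := congrArg (eval 0) hscaled
  simp only [eval_mul, eval_C, eval_sub, eval_comp, eval_X, zero_sub, ← coeff_zero_eq_eval_zero,
    bernoulli_eval_neg_of_odd heven.add_one, bernoulli_eval_natCast_succ_of_even hi heven] at hconst
  have hi' : (i + 1 : ℚ) ≠ 0 := by positivity
  exact mul_left_cancel₀ hi' (by rw [hconst]; ring)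

/-- For even positive `i` and positive `d0`, any `P ∈ ℚ[x]` with
`P(r) = ∑_{k=d0+1}^{r-d0-1} k^i` for all `r ≥ 2*d0+2` has constant coefficient
`-2 ∑_{k=1}^{d0} k^i`. -/
theorem mid_range_power_sum_even_constant (i d0 : ℕ) (hi : 0 < i) (heven : Even i)
    (hd0 : 0 < d0) (P : Polynomial ℚ)
    (hP : ∀ r : ℕ, 2 * d0 + 2 ≤ r →
      P.eval (r : ℚ) = ∑ k ∈ Finset.Icc (d0 + 1) (r - d0 - 1), (k : ℚ) ^ i) :
    P.coeff 0 = -2 * ∑ k ∈ Finset.Icc 1 d0, (k : ℚ) ^ i :=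
  mid_range_power_sum_even_constant_general i d0 hi heven P hP
end
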